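/- Let b : ℝ → ℝ be continuous on [0,T] and differentiable on (0,T) with b(0) > 0, and suppose b(t₀) < 0 for some t₀ ∈ (0,T]. Then there exists t₁ ∈ (0, t₀) with b(t₁) = 0 and b'(t₁) ≤ 0; consequently if γ > 0 and b'(t) + γ·b(t) > 0 whenever b(t) = 0, the trajectory can never leave the safe set {b ≥ 0}. -/

import Mathlib

/-! If `b` is positive at `0` and negative at `t₀`, let `t₁` be the last zero of `b` before `t₀`.
Then `b < 0` on `(t₁, t₀]`, so every right difference quotient of `b` at `t₁` is negative and
`b'(t₁) ≤ 0`. Under the barrier condition `b'(t) + γ b(t) > 0` on `{b = 0}` this is impossible,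
so `b` never becomes negative. -/

open Set Filter Topology

theorem HasDerivWithinAt.nonpos_of_eventually_le_right {f : ℝ → ℝ} {f' a : ℝ}
    (hf : HasDerivWithinAt f f' (Ioi a) a) (hle : ∀ᶠ x in 𝓝[>] a, f x ≤ f a) : f' ≤ 0 := by
  refine le_of_tendsto ((hasDerivWithinAt_iff_tendsto_slope' (notMem_Ioi.2 le_rfl)).1 hf) ?_
  filter_upwards [hle, self_mem_nhdsWithin] with x hfx hax
  rw [slope_def_field]
  exact div_nonpos_of_nonpos_of_nonneg (sub_nonpos.2 hfx) (sub_nonneg.2 (le_of_lt hax))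

theorem exists_last_zero_of_pos_of_neg {f : ℝ → ℝ} {a c : ℝ} (hac : a ≤ c)
    (hf : ContinuousOn f (Icc a c)) (ha : 0 < f a) (hc : f c < 0) :
    ∃ t ∈ Ioo a c, f t = 0 ∧ ∀ x ∈ Ioc t c, f x < 0 := by
  set zeros := Icc a c ∩ f ⁻¹' {0}
  have zeros_compact : IsCompact zeros :=
    isCompact_Icc.of_isClosed_subset
      (hf.preimage_isClosed_of_isClosed isClosed_Icc isClosed_singleton) inter_subset_left
  have zeros_nonempty : zeros.Nonempty := by
    obtain ⟨t, ht, hft⟩ := intermediate_value_Icc' hac hf ⟨hc.le, ha.le⟩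
    exact ⟨t, ht, hft⟩
  obtain ⟨t, ⟨⟨hat, htc⟩, hft : f t = 0⟩, ht_max⟩ := zeros_compact.exists_isGreatest zeros_nonempty
  have hat : a < t := hat.lt_of_ne (by rintro rfl; linarith)
  have htc : t < c := htc.lt_of_ne (by rintro rfl; linarith)
  refine ⟨t, ⟨hat, htc⟩, hft, fun x ⟨htx, hxc⟩ => ?_⟩
  by_contra! hfx
  obtain ⟨y, ⟨hxy, hyc⟩, hfy⟩ :=
    intermediate_value_Icc' hxc (hf.mono (Icc_subset_Icc (hat.trans htx).le le_rfl)) ⟨hc.le, hfx⟩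
  have : y ≤ t := ht_max ⟨⟨(hat.trans htx).le.trans hxy, hyc⟩, hfy⟩
  linarith

theorem exists_zero_deriv_nonpos_of_pos_of_neg {f : ℝ → ℝ} {a c : ℝ} (hac : a ≤ c)
    (hf : ContinuousOn f (Icc a c)) (hdiff : ∀ t ∈ Ioo a c, DifferentiableAt ℝ f t)
    (ha : 0 < f a) (hc : f c < 0) : ∃ t ∈ Ioo a c, f t = 0 ∧ deriv f t ≤ 0 := by
  obtain ⟨t, ht, hft, hneg⟩ := exists_last_zero_of_pos_of_neg hac hf ha hc
  refine ⟨t, ht, hft, (hdiff t ht).hasDerivAt.hasDerivWithinAt.nonpos_of_eventually_le_right ?_⟩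
  filter_upwards [Ioc_mem_nhdsGT ht.2] with x hx
  exact hft ▸ (hneg x hx).le

theorem barrier_boundary_crossing_general (b : ℝ → ℝ) (T : ℝ)
    (hcont : ContinuousOn b (Set.Icc 0 T))
    (hdiff : ∀ t ∈ Set.Ioo 0 T, DifferentiableAt ℝ b t)
    (h0 : b 0 > 0) :
    (∀ t₀ ∈ Set.Ioc 0 T, b t₀ < 0 →
        ∃ t₁ ∈ Set.Ioo 0 t₀, b t₁ = 0 ∧ deriv b t₁ ≤ 0) ∧
      (∀ γ : ℝ, 0 < γ →
        (∀ t ∈ Set.Ioo 0 T, b t = 0 → deriv b t + γ * b t > 0) →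
        ∀ t ∈ Set.Icc 0 T, 0 ≤ b t) := by
  have crossing : ∀ t₀ ∈ Ioc 0 T, b t₀ < 0 → ∃ t₁ ∈ Ioo 0 t₀, b t₁ = 0 ∧ deriv b t₁ ≤ 0 :=
    fun t₀ ⟨ht₀, ht₀T⟩ hneg =>
      exists_zero_deriv_nonpos_of_pos_of_neg ht₀.le (hcont.mono (Icc_subset_Icc le_rfl ht₀T))
        (fun t ht => hdiff t ⟨ht.1, ht.2.trans_le ht₀T⟩) h0 hneg
  refine ⟨crossing, fun γ _ hbarrier t ht => ?_⟩
  by_contra! hneg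
  have ht0 : 0 < t := ht.1.lt_of_ne (by rintro rfl; linarith)
  obtain ⟨t₁, ht₁, hzero, hderiv⟩ := crossing t ⟨ht0, ht.2⟩ hneg
  have := hbarrier t₁ ⟨ht₁.1, ht₁.2.trans_le ht.2⟩ hzero
  rw [hzero] at this
  linarith

theorem barrier_boundary_crossing (b : ℝ → ℝ) (T : ℝ) (hT : 0 < T)
    (hcont : ContinuousOn b (Set.Icc 0 T))
    (hdiff : ∀ t ∈ Set.Ioo 0 T, DifferentiableAt ℝ b t)
    (h0 : b 0 > 0) :
    (∀ t₀ ∈ Set.Ioc 0 T, b t₀ < 0 →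
        ∃ t₁ ∈ Set.Ioo 0 t₀, b t₁ = 0 ∧ deriv b t₁ ≤ 0) ∧
      (∀ γ : ℝ, 0 < γ →
        (∀ t ∈ Set.Ioo 0 T, b t = 0 → deriv b t + γ * b t > 0) →
        ∀ t ∈ Set.Icc 0 T, 0 ≤ b t) :=
  barrier_boundary_crossing_general b T hcont hdiff h0
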